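/- arXiv:2303.09251 — 4 statements merged into one kernel-verified Lean document; each statement's English description precedes it below -/
import Mathlib

section
/- Let (W,S) be a Coxeter system, τ ∈ W, and s ∈ S a simple reflection with ℓ(sτ) > ℓ(τ). Set t = τ⁻¹sτ. Then for every ω ∈ W, if ℓ(tω) > ℓ(ω) then ℓ(sτω) > ℓ(τω), and if ℓ(tω) < ℓ(ω) then ℓ(sτω) < ℓ(τω). -/
/-!
Tits' argument. The permutations `(x, ε) ↦ (s x s, ε + [x = s])` of `W × ZMod 2`, for `s`
simple, satisfy the Coxeter relations, so `W` acts by `w • (x, ε) = (w x w⁻¹, ε + η(w, x))`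
(`titsRep`, `titsCocycle`). The cocycle `η(w, t)` counts modulo 2 the occurrences of `t` in the
right inversion sequence of a word for `w`; for a reflection `t` it is nonzero exactly when
`ℓ(w t) < ℓ(w)`. Applied to the cocycle identity `η(ω⁻¹τ⁻¹, s) = η(τ⁻¹, s) + η(ω⁻¹, τ⁻¹sτ)`,
where `η(τ⁻¹, s) = 0` because `ℓ(sτ) > ℓ(τ)`, this criterion gives
`ℓ(sτω) < ℓ(τω) ↔ ℓ(tω) < ℓ(ω)`.
-/

open Finset

open scoped Classical

section TitsPerm

variable {G : Type*} [Group G]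

theorem mul_mul_eq_iff_of_mul_self {a b x y : G} (ha : a * a = 1) (hb : b * b = 1) :
    a * x * b = y ↔ x = a * y * b := by
  constructor <;> rintro rfl <;> simp [mul_assoc, ← mul_assoc a a, ha, hb]

noncomputable def titsPerm (a : G) (ha : a * a = 1) : Equiv.Perm (G × ZMod 2) :=
  Function.Involutive.toPerm (fun x => (a * x.1 * a, x.2 + if x.1 = a then 1 else 0)) <| by
    rintro ⟨x, ε⟩
    have hx : a * x * a = a ↔ x = a := by
      rw [mul_mul_eq_iff_of_mul_self ha ha, mul_assoc, ha, mul_one]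
    simp only [hx, add_assoc, CharTwo.add_self_eq_zero, add_zero, Prod.mk.injEq, and_true]
    rw [mul_mul_eq_iff_of_mul_self ha ha]

theorem titsPerm_apply {a : G} (ha : a * a = 1) (x : G × ZMod 2) :
    titsPerm a ha x = (a * x.1 * a, x.2 + if x.1 = a then 1 else 0) := rfl

theorem titsPerm_mul_pow_apply {a b : G} (ha : a * a = 1) (hb : b * b = 1) (k : ℕ)
    (x : G × ZMod 2) :
    ((titsPerm a ha * titsPerm b hb) ^ k) x =
      ((a * b) ^ k * x.1 * (b * a) ^ k,
        x.2 + ∑ r ∈ range (2 * k), if x.1 = (b * a) ^ r * b then 1 else 0) := by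
  induction k generalizing x with
  | zero => simp
  | succ k ih =>
    have hshift (r : ℕ) :
        a * (b * x.1 * b) * a = (b * a) ^ r * b ↔ x.1 = (b * a) ^ (r + 2) * b := by
      rw [mul_mul_eq_iff_of_mul_self ha ha, mul_mul_eq_iff_of_mul_self hb hb, pow_succ, pow_succ']
      simp only [mul_assoc]
    rw [pow_succ, Equiv.Perm.mul_apply, Equiv.Perm.mul_apply, titsPerm_apply, titsPerm_apply, ih]
    simp only [Prod.mk.injEq, hshift, mul_mul_eq_iff_of_mul_self hb hb]
    refine ⟨by rw [pow_succ, pow_succ' (b * a)]; simp only [mul_assoc], ?_⟩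
    rw [mul_add, mul_one, sum_range_succ', sum_range_succ']
    simp only [pow_zero, one_mul, zero_add, pow_one, Nat.add_assoc, Nat.reduceAdd]
    abel

theorem titsPerm_mul_pow_eq_one {a b : G} (ha : a * a = 1) (hb : b * b = 1) {m : ℕ}
    (hm : (a * b) ^ m = 1) : (titsPerm a ha * titsPerm b hb) ^ m = 1 := by
  have hm' : (b * a) ^ m = 1 := by simpa [hm] using conj_pow (a := a⁻¹) (b := a * b) (i := m)
  refine Equiv.ext fun x => ?_
  -- the sequence of reflections `(b * a) ^ r * b` has period `m`, so each term occurs twice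
  have hsum : ∑ r ∈ range (2 * m), (if x.1 = (b * a) ^ r * b then 1 else 0 : ZMod 2) = 0 := by
    simp only [two_mul, sum_range_add, pow_add, hm', one_mul, CharTwo.add_self_eq_zero]
  rw [titsPerm_mul_pow_apply, hm, hm', hsum, one_mul, mul_one, add_zero]
  rfl

end TitsPerm

namespace CoxeterSystem

variable {B W : Type*} [Group W] {M : CoxeterMatrix B} (cs : CoxeterSystem M W)

noncomputable def titsRep : W →* Equiv.Perm (W × ZMod 2) :=
  cs.lift ⟨fun i => titsPerm (cs.simple i) (cs.simple_mul_simple_self i),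
    fun i i' => titsPerm_mul_pow_eq_one _ _ (cs.simple_mul_simple_pow i i')⟩

noncomputable def titsCocycle (w t : W) : ZMod 2 := (cs.titsRep w (t, 0)).2

theorem titsRep_simple (i : B) :
    cs.titsRep (cs.simple i) = titsPerm (cs.simple i) (cs.simple_mul_simple_self i) :=
  cs.lift_apply_simple _ i

theorem titsRep_apply (w : W) (x : W × ZMod 2) :
    cs.titsRep w x = (w * x.1 * w⁻¹, x.2 + cs.titsCocycle w x.1) := by
  induction w using cs.simple_induction_left generalizing x with
  | one => simp [titsCocycle]
  | mul_simple_left w i ih =>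
    have key (y : W × ZMod 2) : cs.titsRep (cs.simple i * w) y =
        (cs.simple i * w * y.1 * (w⁻¹ * cs.simple i),
          y.2 + (cs.titsCocycle w y.1 + if w * y.1 * w⁻¹ = cs.simple i then 1 else 0)) := by
      rw [map_mul, Equiv.Perm.mul_apply, ih, titsRep_simple, titsPerm_apply]
      simp only [mul_assoc, add_assoc]
    have hN : cs.titsCocycle (cs.simple i * w) x.1 =
        cs.titsCocycle w x.1 + if w * x.1 * w⁻¹ = cs.simple i then 1 else 0 :=
      (congr_arg Prod.snd (key (x.1, 0))).trans (zero_add _)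
    rw [key, hN, mul_inv_rev, cs.inv_simple]

theorem titsCocycle_one (t : W) : cs.titsCocycle 1 t = 0 := by
  simp [titsCocycle]

theorem titsCocycle_mul (u v t : W) :
    cs.titsCocycle (u * v) t = cs.titsCocycle v t + cs.titsCocycle u (v * t * v⁻¹) := by
  have h := congr_arg Prod.snd (DFunLike.congr_fun (map_mul cs.titsRep u v) (t, 0))
  rw [Equiv.Perm.mul_apply, titsRep_apply cs v, titsRep_apply cs u, zero_add] at h
  exact h

theorem titsCocycle_simple (i : B) (t : W) :
    cs.titsCocycle (cs.simple i) t = if t = cs.simple i then 1 else 0 := by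
  simp [titsCocycle, titsRep_simple, titsPerm_apply]

theorem titsCocycle_inv (u t : W) : cs.titsCocycle u⁻¹ (u * t * u⁻¹) = cs.titsCocycle u t := by
  have h := cs.titsCocycle_mul u⁻¹ u t
  rw [inv_mul_cancel, titsCocycle_one, eq_comm, ← CharTwo.sub_eq_add, sub_eq_zero] at h
  exact h.symm

theorem titsCocycle_self {t : W} (ht : cs.IsReflection t) : cs.titsCocycle t t = 1 := by
  obtain ⟨u, i, rfl⟩ := ht
  -- the contributions of `u` and `u⁻¹` cancel, leaving `η(s, s) = 1`
  have hconj : u⁻¹ * (u * cs.simple i * u⁻¹) * u⁻¹⁻¹ = cs.simple i := by group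
  rw [titsCocycle_mul, titsCocycle_inv, hconj, titsCocycle_mul, titsCocycle_simple, if_pos rfl,
    mul_inv_cancel_right, add_left_comm, CharTwo.add_self_eq_zero, add_zero]

theorem mem_rightInvSeq_of_titsCocycle_ne_zero (ω : List B) {t : W}
    (h : cs.titsCocycle (cs.wordProd ω) t ≠ 0) : t ∈ cs.rightInvSeq ω := by
  induction ω with
  | nil => exact absurd (cs.titsCocycle_one t) h
  | cons i ω ih =>
    rw [wordProd_cons, titsCocycle_mul, titsCocycle_simple] at h
    by_cases hc : cs.wordProd ω * t * (cs.wordProd ω)⁻¹ = cs.simple i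
    · refine List.mem_cons.2 (Or.inl ?_)
      rw [← hc]
      group
    · rw [if_neg hc, add_zero] at h
      exact List.mem_cons_of_mem _ (ih h)

theorem length_mul_lt_of_titsCocycle_ne_zero {w t : W} (h : cs.titsCocycle w t ≠ 0) :
    cs.length (w * t) < cs.length w := by
  obtain ⟨ω, hω, rfl⟩ := cs.exists_isReduced w
  exact (cs.isRightInversion_of_mem_rightInvSeq hω
    (cs.mem_rightInvSeq_of_titsCocycle_ne_zero ω h)).2

theorem titsCocycle_mul_self_of_isReflection {t : W} (ht : cs.IsReflection t) (w : W) :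
    cs.titsCocycle (w * t) t = 1 + cs.titsCocycle w t := by
  rw [titsCocycle_mul, cs.titsCocycle_self ht, mul_inv_cancel_right]

theorem titsCocycle_ne_zero_iff {w t : W} (ht : cs.IsReflection t) :
    cs.titsCocycle w t ≠ 0 ↔ cs.length (w * t) < cs.length w := by
  refine ⟨cs.length_mul_lt_of_titsCocycle_ne_zero, fun hlt h0 => ?_⟩
  have h1 : cs.titsCocycle (w * t) t ≠ 0 := by
    rw [cs.titsCocycle_mul_self_of_isReflection ht, h0, add_zero]
    exact one_ne_zero
  have := cs.length_mul_lt_of_titsCocycle_ne_zero h1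
  rw [mul_assoc, ht.mul_self, mul_one] at this
  exact lt_asymm hlt this

theorem length_mul_lt_iff_titsCocycle_inv_ne_zero {r : W} (hr : cs.IsReflection r) (w : W) :
    cs.length (r * w) < cs.length w ↔ cs.titsCocycle w⁻¹ r ≠ 0 := by
  rw [cs.titsCocycle_ne_zero_iff hr, ← cs.length_inv (w⁻¹ * r), mul_inv_rev, inv_inv, hr.inv,
    cs.length_inv]

theorem length_mul_mul_lt_iff {r τ : W} (hr : cs.IsReflection r)
    (hτ : cs.length τ < cs.length (r * τ)) (ω : W) :
    cs.length (r * τ * ω) < cs.length (τ * ω) ↔ cs.length (τ⁻¹ * r * τ * ω) < cs.length ω := by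
  have hτ0 : cs.titsCocycle τ⁻¹ r = 0 :=
    not_not.1 ((cs.length_mul_lt_iff_titsCocycle_inv_ne_zero hr τ).not.1 hτ.not_gt)
  have ht : cs.IsReflection (τ⁻¹ * r * τ) := by simpa using hr.conj τ⁻¹
  rw [mul_assoc r, cs.length_mul_lt_iff_titsCocycle_inv_ne_zero hr,
    cs.length_mul_lt_iff_titsCocycle_inv_ne_zero ht, mul_inv_rev, titsCocycle_mul, hτ0, zero_add,
    inv_inv]

end CoxeterSystem

/-- lifting property: for `s` simple with `ℓ(sτ) > ℓ(τ)` and `t = τ⁻¹sτ`,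
if `ℓ(tω) > ℓ(ω)` then `ℓ(sτω) > ℓ(τω)`, and if `ℓ(tω) < ℓ(ω)` then `ℓ(sτω) < ℓ(τω)`. -/
theorem stmt_1 {B W : Type*} [Group W] {M : CoxeterMatrix B}
    (cs : CoxeterSystem M W) (τ : W) (i : B)
    (hs : cs.length τ < cs.length (cs.simple i * τ)) :
    ∀ ω : W,
      (cs.length ω < cs.length (τ⁻¹ * cs.simple i * τ * ω) →
        cs.length (τ * ω) < cs.length (cs.simple i * τ * ω)) ∧
      (cs.length (τ⁻¹ * cs.simple i * τ * ω) < cs.length ω →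
        cs.length (cs.simple i * τ * ω) < cs.length (τ * ω)) := by
  intro ω
  have hsi := cs.isReflection_simple i
  have key := cs.length_mul_mul_lt_iff hsi hs ω
  have hne : cs.length (cs.simple i * τ * ω) ≠ cs.length (τ * ω) := by
    simpa only [mul_assoc] using hsi.length_mul_right_ne (τ * ω)
  exact ⟨fun h => by omega, key.2⟩
end

section
/- Let σ ∈ S_n and let A = {i₁ < … < i_k} ⊆ {1,…,n−1}. Write t_i = (i,n). Then the following are equivalent: (1) σ < t_{i₁}σ < t_{i₂}t_{i₁}σ < … < t_{i_k}⋯t_{i₁}σ in the Bruhat order; (2) σ⁻¹(i_k) < σ⁻¹(i_{k−1}) < … < σ⁻¹(i₁) < σ⁻¹(n). -/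
/-!
For `a < b`, the product `swap a b * π` lies above `π` in the Bruhat order iff it has more
inversions, iff `π⁻¹ a < π⁻¹ b`. Since the `i j` are distinct and different from `n`,
`(t_{i_m}⋯t_{i_1}σ)⁻¹` agrees with `σ⁻¹` at `i_{m+1}` and sends `n` to `σ⁻¹(i_m)` (to `σ⁻¹(n)`
if `m = 0`). So the `m`-th step of the chain goes up iff `σ⁻¹(i_{m+1}) < σ⁻¹(i_m)`, and the chain
condition says that `σ⁻¹(n), σ⁻¹(i_1), …, σ⁻¹(i_k)` is strictly decreasing.
-/

/-- The number of inversions of a permutation. -/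
def permLen {n : ℕ} (σ : Equiv.Perm (Fin n)) : ℕ :=
  (Finset.univ.filter (fun p : Fin n × Fin n => p.1 < p.2 ∧ σ p.2 < σ p.1)).card

/-- The Bruhat order on the symmetric group. -/
def permBruhatLE {n : ℕ} (u v : Equiv.Perm (Fin n)) : Prop :=
  Relation.ReflTransGen
    (fun x y => (∃ a b : Fin n, a ≠ b ∧ y = Equiv.swap a b * x) ∧
      permLen x < permLen y) u v

/-- The strict Bruhat order. -/
def permBruhatLT {n : ℕ} (u v : Equiv.Perm (Fin n)) : Prop :=
  permBruhatLE u v ∧ u ≠ v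

/-- The partial product `t_{i_m}⋯t_{i_1}·σ`, where `t_i = (i, n)`. -/
def chainProd {n k : ℕ} (σ : Equiv.Perm (Fin (n + 1))) (i : Fin k → Fin (n + 1))
    (m : ℕ) : Equiv.Perm (Fin (n + 1)) :=
  (((List.ofFn fun j => Equiv.swap (i j) (Fin.last n)).take m).reverse).prod * σ

open Equiv Finset

def permInversions {n : ℕ} (π : Perm (Fin n)) : Finset (Fin n × Fin n) :=
  univ.filter fun p => p.1 < p.2 ∧ π p.2 < π p.1

@[simp]
lemma mem_permInversions {n : ℕ} {π : Perm (Fin n)} {p : Fin n × Fin n} :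
    p ∈ permInversions π ↔ p.1 < p.2 ∧ π p.2 < π p.1 := by
  simp [permInversions]

lemma permLen_eq_card_permInversions {n : ℕ} (π : Perm (Fin n)) :
    permLen π = (permInversions π).card := rfl

lemma swap_lt_swap_of_inversion_lost {n : ℕ} {π : Perm (Fin n)} {u v p q : Fin n}
    (huv : u < v) (hπ : π u < π v) (hpq : p < q) (hinv : π q < π p)
    (hlost : ¬ π (swap u v q) < π (swap u v p)) : swap u v p < swap u v q := by
  simp only [swap_apply_def] at hlost ⊢
  split_ifs at hlost ⊢ <;> grind

/-- `τ × τ` (with `τ = swap u v`) maps the inversions that `π` loses in `π * τ` injectively to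
gained ones, and misses the gained inversion `(u, v)`. -/
lemma permLen_lt_mul_swap {n : ℕ} (π : Perm (Fin n)) {u v : Fin n} (huv : u < v)
    (hπ : π u < π v) : permLen π < permLen (π * swap u v) := by
  set I := permInversions π
  set J := permInversions (π * swap u v)
  rw [permLen_eq_card_permInversions, permLen_eq_card_permInversions,
    ← card_sdiff_lt_card_sdiff_iff]
  set τ := Prod.map (swap u v) (swap u v)
  have hτ : Function.Injective τ := (swap u v).injective.prodMap (swap u v).injective
  have hmaps : (I \ J).image τ ⊆ J \ I := by
    simp only [subset_iff, mem_image, mem_sdiff, I, J, mem_permInversions,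
      Perm.mul_apply, not_and, not_lt]
    rintro _ ⟨⟨p, q⟩, ⟨⟨hpq, hinv⟩, hlost⟩, rfl⟩
    have := swap_lt_swap_of_inversion_lost huv hπ hpq hinv (not_lt.2 (hlost hpq))
    simp_all [τ]
  have hgained : (u, v) ∈ J \ I := by
    simp [I, J, huv, hπ, hπ.le]
  have hgained_not_image : (u, v) ∉ (I \ J).image τ := by
    rintro hmem
    obtain ⟨x, hx, hxuv⟩ := mem_image.1 hmem
    obtain rfl : x = (v, u) := hτ (hxuv.trans (by simp [τ]))
    exact (mem_permInversions.1 (mem_sdiff.1 hx).1).1.not_gt huv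
  calc #(I \ J) = #((I \ J).image τ) := (card_image_of_injective _ hτ).symm
    _ < #(J \ I) := card_lt_card ⟨hmaps, fun h => hgained_not_image (h hgained)⟩

lemma permLen_lt_swap_mul_iff {n : ℕ} (π : Perm (Fin n)) {a b : Fin n} (hab : a < b) :
    permLen π < permLen (swap a b * π) ↔ π⁻¹ a < π⁻¹ b := by
  rw [swap_mul_eq_mul_swap]
  refine ⟨fun hlt => ?_, fun h => permLen_lt_mul_swap π h (by simpa using hab)⟩
  by_contra! hle
  have hne : π⁻¹ b ≠ π⁻¹ a := by simpa using hab.ne'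
  have hback := permLen_lt_mul_swap (π * swap (π⁻¹ a) (π⁻¹ b)) (hle.lt_of_ne hne)
    (by simpa [swap_apply_of_ne_of_ne, hne, hne.symm] using hab)
  rw [swap_comm (π⁻¹ b), mul_swap_mul_self] at hback
  exact hlt.not_gt hback

lemma permLen_le_of_permBruhatLE {n : ℕ} {u v : Perm (Fin n)} (h : permBruhatLE u v) :
    permLen u ≤ permLen v := by
  induction h with
  | refl => rfl
  | tail _ hstep ih => exact ih.trans hstep.2.le

lemma permLen_lt_of_permBruhatLT {n : ℕ} {u v : Perm (Fin n)} (h : permBruhatLT u v) :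
    permLen u < permLen v := by
  obtain ⟨hle, hne⟩ := h
  rcases hle.cases_head with rfl | ⟨w, huw, hwv⟩
  · exact absurd rfl hne
  · exact huw.2.trans_le (permLen_le_of_permBruhatLE hwv)

lemma permBruhatLT_swap_mul_iff {n : ℕ} (π : Perm (Fin n)) {a b : Fin n} (hab : a ≠ b) :
    permBruhatLT π (swap a b * π) ↔ permLen π < permLen (swap a b * π) :=
  ⟨permLen_lt_of_permBruhatLT, fun h =>
    ⟨.single ⟨⟨a, b, hab, rfl⟩, h⟩, fun he => h.ne (congrArg permLen he)⟩⟩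

section chainProd

variable {n k : ℕ} (σ : Perm (Fin (n + 1))) (i : Fin k → Fin (n + 1))

@[simp]
lemma chainProd_zero : chainProd σ i 0 = σ := by
  simp [chainProd]

lemma chainProd_succ {m : ℕ} (hm : m < k) :
    chainProd σ i (m + 1) = swap (i ⟨m, hm⟩) (Fin.last n) * chainProd σ i m := by
  simp [chainProd, List.take_add_one, hm, mul_assoc]

variable {i}

lemma chainProd_inv_apply_of_le (hi : Function.Injective i) (hlast : ∀ j, i j ≠ Fin.last n)
    {m : ℕ} {j : Fin k} (hmj : m ≤ j) : (chainProd σ i m)⁻¹ (i j) = σ⁻¹ (i j) := by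
  induction m with
  | zero => simp
  | succ m ih =>
    have hm : m < k := by omega
    have hne : i j ≠ i ⟨m, hm⟩ := hi.ne (Fin.ne_of_val_ne (by simp; omega))
    rw [chainProd_succ σ i hm, mul_inv_rev, Perm.mul_apply, swap_inv,
      swap_apply_of_ne_of_ne hne (hlast j), ih (by omega)]

lemma chainProd_inv_last (hi : Function.Injective i) (hlast : ∀ j, i j ≠ Fin.last n)
    (m : Fin (k + 1)) :
    (chainProd σ i m)⁻¹ (Fin.last n) =
      Fin.cons (α := fun _ => Fin (n + 1)) (σ⁻¹ (Fin.last n)) (fun j => σ⁻¹ (i j)) m := by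
  induction m using Fin.cases with
  | zero => simp
  | succ j =>
    rw [Fin.val_succ, chainProd_succ σ i j.isLt, mul_inv_rev, Perm.mul_apply, swap_inv,
      swap_apply_right, chainProd_inv_apply_of_le σ hi hlast le_rfl]
    simp

end chainProd

/-- for `A = {i₁ < … < i_k} ⊆ {1,…,n−1}`, the chain condition
`σ < t_{i₁}σ < t_{i₂}t_{i₁}σ < …` holds iff
`σ⁻¹(i_k) < … < σ⁻¹(i₁) < σ⁻¹(n)`. -/
theorem stmt_10 {n k : ℕ} (σ : Equiv.Perm (Fin (n + 1)))
    (i : Fin k → Fin (n + 1)) (hmono : StrictMono i)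
    (hlt : ∀ j, i j < Fin.last n) :
    (∀ m : Fin k, permBruhatLT (chainProd σ i m) (chainProd σ i (m + 1))) ↔
      ((∀ a b : Fin k, a < b → σ⁻¹ (i b) < σ⁻¹ (i a)) ∧
        ∀ a : Fin k, σ⁻¹ (i a) < σ⁻¹ (Fin.last n)) := by
  have hlast j := (hlt j).ne
  set g : Fin (k + 1) → Fin (n + 1) := Fin.cons (σ⁻¹ (Fin.last n)) (fun j => σ⁻¹ (i j))
  have hstep (m : Fin k) :
      permBruhatLT (chainProd σ i m) (chainProd σ i (m + 1)) ↔ g m.succ < g m.castSucc := by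
    rw [chainProd_succ σ i m.isLt, permBruhatLT_swap_mul_iff _ (hlast m),
      permLen_lt_swap_mul_iff _ (hlt m), chainProd_inv_apply_of_le σ hmono.injective hlast le_rfl,
      ← Fin.val_castSucc, chainProd_inv_last σ hmono.injective hlast]
    simp [g]
  rw [forall_congr' hstep, ← Fin.strictAnti_iff_succ_lt, and_comm]
  -- `StrictAnti` into `Fin (n + 1)` is `StrictMono` into its order dual.
  exact Fin.strictMono_cons (α := (Fin (n + 1))ᵒᵈ)
end

section
/- With notation as above (σ ∈ S_n, 𝒟(σ), 𝒫(σ), A^σ, B_σ), for every A in the image of B ↦ B_σ, the fiber {B ∈ 𝒫(σ) : B_σ = A} equals {B ∈ 𝒫(σ) : A ⊆ B ⊆ A^σ}. -/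
open scoped Classical

/-- `𝒟(σ) = {i < n : σ⁻¹(i) < σ⁻¹(n)}`. -/
noncomputable def permD {n : ℕ} (σ : Equiv.Perm (Fin (n + 1))) : Finset (Fin (n + 1)) :=
  Finset.univ.filter (fun i => i < Fin.last n ∧ σ⁻¹ i < σ⁻¹ (Fin.last n))

/-- `A^σ = {j < n : ∃ i ∈ A, i ≤ j, σ⁻¹(i) ≤ σ⁻¹(j) ≤ σ⁻¹(n)}`. -/
noncomputable def upSet {n : ℕ} (σ : Equiv.Perm (Fin (n + 1)))
    (A : Finset (Fin (n + 1))) : Finset (Fin (n + 1)) :=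
  Finset.univ.filter (fun j => j < Fin.last n ∧
    ∃ i ∈ A, i ≤ j ∧ σ⁻¹ i ≤ σ⁻¹ j ∧ σ⁻¹ j ≤ σ⁻¹ (Fin.last n))

/-- `B_σ`, the output of the greedy algorithm on `B`: `i₁` is minimal in `B`, and
inductively `i_{m+1}` is the minimal element of `B` greater than `i_m` with
`σ⁻¹(i_{m+1}) < σ⁻¹(i_m)`.  Its output is characterized as the set of `i ∈ B`
whose `σ⁻¹`-value is smaller than that of every earlier element of `B`. -/
noncomputable def greedy {n : ℕ} (σ : Equiv.Perm (Fin (n + 1)))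
    (B : Finset (Fin (n + 1))) : Finset (Fin (n + 1)) :=
  B.filter (fun i => ∀ j ∈ B, j < i → σ⁻¹ i < σ⁻¹ j)

/-!
An element `j ∈ B ⊆ 𝒟(σ)` lies in `(B_σ)^σ`, witnessed by the element of `B ∩ [0, j]` with the
least `σ⁻¹`-value, which the greedy algorithm necessarily picks. Conversely, if `A ⊆ B ⊆ A^σ`,
every `i ∈ B \ A` is dominated by some earlier `a ∈ A` with `σ⁻¹ a ≤ σ⁻¹ i`, so it is skipped,
while the elements of `A` are kept because `σ⁻¹` is strictly decreasing along any greedy output.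
-/

namespace Equiv.Perm

variable {n : ℕ} (σ : Equiv.Perm (Fin (n + 1)))

theorem mem_permD {i : Fin (n + 1)} :
    i ∈ permD σ ↔ i < Fin.last n ∧ σ⁻¹ i < σ⁻¹ (Fin.last n) := by
  simp [permD]

theorem mem_upSet {A : Finset (Fin (n + 1))} {j : Fin (n + 1)} :
    j ∈ upSet σ A ↔ j < Fin.last n ∧
      ∃ i ∈ A, i ≤ j ∧ σ⁻¹ i ≤ σ⁻¹ j ∧ σ⁻¹ j ≤ σ⁻¹ (Fin.last n) := by
  simp [upSet]

theorem mem_greedy {B : Finset (Fin (n + 1))} {i : Fin (n + 1)} :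
    i ∈ greedy σ B ↔ i ∈ B ∧ ∀ j ∈ B, j < i → σ⁻¹ i < σ⁻¹ j :=
  Finset.mem_filter

theorem greedy_subset (B : Finset (Fin (n + 1))) : greedy σ B ⊆ B :=
  Finset.filter_subset _ _

theorem strictAntiOn_greedy (B : Finset (Fin (n + 1))) :
    StrictAntiOn ⇑σ⁻¹ (greedy σ B : Set (Fin (n + 1))) := fun j hj _ hi hji =>
  ((mem_greedy σ).1 hi).2 j ((mem_greedy σ).1 hj).1 hji

theorem exists_mem_greedy_le {B : Finset (Fin (n + 1))} {j : Fin (n + 1)} (hj : j ∈ B) :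
    ∃ i ∈ greedy σ B, i ≤ j ∧ σ⁻¹ i ≤ σ⁻¹ j := by
  have hjB : j ∈ B.filter (· ≤ j) := Finset.mem_filter.2 ⟨hj, le_rfl⟩
  obtain ⟨i, hi, hmin⟩ := Finset.exists_min_image (B.filter (· ≤ j)) (σ⁻¹ ·) ⟨j, hjB⟩
  obtain ⟨hiB, hij⟩ := Finset.mem_filter.1 hi
  refine ⟨i, (mem_greedy σ).2 ⟨hiB, fun k hk hki => ?_⟩, hij, hmin j hjB⟩
  have hle : σ⁻¹ i ≤ σ⁻¹ k := hmin k (Finset.mem_filter.2 ⟨hk, hki.le.trans hij⟩)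
  exact hle.lt_of_ne fun h => hki.ne' (σ⁻¹.injective h)

theorem subset_upSet_greedy {B : Finset (Fin (n + 1))} (hB : B ⊆ permD σ) :
    B ⊆ upSet σ (greedy σ B) := by
  intro j hj
  obtain ⟨hjn, hjσ⟩ := (mem_permD σ).1 (hB hj)
  obtain ⟨i, hi, hij, hσ⟩ := exists_mem_greedy_le σ hj
  exact (mem_upSet σ).2 ⟨hjn, i, hi, hij, hσ, hjσ.le⟩

theorem greedy_subset_of_subset_upSet {A B : Finset (Fin (n + 1))} (hAB : A ⊆ B)
    (hBA : B ⊆ upSet σ A) : greedy σ B ⊆ A := by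
  intro i hi
  obtain ⟨hiB, hmin⟩ := (mem_greedy σ).1 hi
  obtain ⟨-, a, ha, hai, hσ, -⟩ := (mem_upSet σ).1 (hBA hiB)
  rcases hai.eq_or_lt with rfl | hlt
  · exact ha
  · exact absurd hσ (hmin a (hAB ha) hlt).not_ge

theorem subset_greedy_of_strictAntiOn {A B : Finset (Fin (n + 1))}
    (hA : StrictAntiOn ⇑σ⁻¹ (A : Set (Fin (n + 1)))) (hAB : A ⊆ B) (hBA : B ⊆ upSet σ A) :
    A ⊆ greedy σ B := by
  intro i hi
  refine (mem_greedy σ).2 ⟨hAB hi, fun j hj hji => ?_⟩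
  obtain ⟨-, a, ha, haj, hσ, -⟩ := (mem_upSet σ).1 (hBA hj)
  exact (hA ha hi (haj.trans_lt hji)).trans_le hσ

end Equiv.Perm

open Equiv.Perm in
/-- for `A` in the image of `B ↦ B_σ`, the fiber
`{B ∈ 𝒫(σ) : B_σ = A}` equals `{B ∈ 𝒫(σ) : A ⊆ B ⊆ A^σ}`. -/
theorem stmt_13 {n : ℕ} (σ : Equiv.Perm (Fin (n + 1)))
    (A : Finset (Fin (n + 1)))
    (hA : ∃ B ⊆ permD σ, greedy σ B = A) :
    ∀ B ⊆ permD σ, (greedy σ B = A ↔ A ⊆ B ∧ B ⊆ upSet σ A) := by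
  obtain ⟨B₀, -, hB₀⟩ := hA
  have hanti : StrictAntiOn ⇑σ⁻¹ (A : Set (Fin (n + 1))) := hB₀ ▸ strictAntiOn_greedy σ B₀
  intro B hB
  constructor
  · rintro rfl
    exact ⟨greedy_subset σ B, subset_upSet_greedy σ hB⟩
  · rintro ⟨hAB, hBA⟩
    exact (greedy_subset_of_subset_upSet σ hAB hBA).antisymm
      (subset_greedy_of_strictAntiOn σ hanti hAB hBA)
end

section
/- Let σ ∈ S_n, B ⊆ 𝒟(σ) nonempty, and let B_σ = {i₁ < … < i_k} be the output of the greedy algorithm. Set σ^B = (i₁,…,i_k,n)·σ. Then σ^B is the supremum of the set {(i,n)·σ : i ∈ B} in the Bruhat order on S_n, i.e. it is an upper bound of this set and every common upper bound z satisfies σ^B ≤ z. -/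
open scoped Classical

/-- `σ^B = (i₁,…,i_k,n)·σ = t_{i_k}⋯t_{i_1}·σ`, where `B_σ = {i₁ < … < i_k}`
is the greedy output and `t_i = (i,n)`. -/
noncomputable def sigmaB {n : ℕ} (σ : Equiv.Perm (Fin (n + 1)))
    (B : Finset (Fin (n + 1))) : Equiv.Perm (Fin (n + 1)) :=
  ((((greedy σ B).sort (· ≤ ·)).map (fun i => Equiv.swap i (Fin.last n))).reverse).prod * σ

/-!
Bruhat order on permutations is detected by dot counts: `u ≤ v` iff
`#{a ≤ p | q ≤ u a} ≤ #{a ≤ p | q ≤ v a}` for all `p, q` (the tableau criterion; for the hard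
half, lower `v` by a transposition at the first position where `u` and `v` differ while staying
above `u`). For `i ∈ 𝒟(σ)`, left multiplication by `(i, n)` raises the dot count of `σ` by one
exactly on the box `[σ⁻¹ i, σ⁻¹ n) × (i, n]`, and applying the transpositions of `B_σ` in
increasing order raises it by one on the union of their boxes. Every `i ∈ B` is dominated by a
greedy element `g` (`g ≤ i`, `σ⁻¹ g ≤ σ⁻¹ i`), whose box contains that of `i`; so the dot count
of `σ^B` is the pointwise maximum of those of the `(i, n)·σ`, which makes `σ^B` their supremum.
-/

open Equiv Finset

section TableauCriterion

variable {n : ℕ}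

def inversions (w : Perm (Fin n)) : Finset (Fin n × Fin n) :=
  univ.filter fun x => x.1 < x.2 ∧ w x.2 < w x.1

lemma permLen_mul_swap_lt (w : Perm (Fin n)) {p₁ p₂ : Fin n} (h : p₁ < p₂)
    (hw : w p₂ < w p₁) : permLen (w * swap p₁ p₂) < permLen w := by
  set s := swap p₁ p₂
  -- Move an inversion of `w * s` by `s` when `s` keeps it ordered: this gives an inversion
  -- of `w` other than `(p₁, p₂)`.
  let F : Fin n × Fin n → Fin n × Fin n := fun x => if s x.1 < s x.2 then (s x.1, s x.2) else x
  have hF : ∀ x ∈ inversions (w * s), F x ∈ (inversions w).erase (p₁, p₂) := by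
    rintro ⟨x, y⟩ hxy
    simp only [F, inversions, mem_erase, mem_filter, mem_univ, true_and, s, Perm.mul_apply,
      swap_apply_def] at hxy ⊢
    split_ifs at hxy ⊢ <;> simp_all <;> grind
  have hinj : Set.InjOn F (inversions (w * s)) := by
    rintro ⟨x, y⟩ hxy ⟨x', y'⟩ hxy' hF
    simp only [F, inversions, coe_filter, mem_univ, true_and, Set.mem_ofPred_eq] at hxy hxy' hF
    split_ifs at hF with hs hs'
    · simpa using hF
    · obtain ⟨rfl, rfl⟩ := Prod.mk.inj hF
      simp [s, hxy.1] at hs'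
    · obtain ⟨rfl, rfl⟩ := Prod.mk.inj hF
      simp [s, hxy'.1] at hs
    · exact hF
  calc permLen (w * s) = #((inversions (w * s)).image F) := (card_image_of_injOn hinj).symm
    _ ≤ #((inversions w).erase (p₁, p₂)) := card_le_card (image_subset_iff.2 hF)
    _ < permLen w := card_erase_lt_of_mem (by simp [inversions, h, hw])

def dotCount (w : Perm (Fin n)) (p q : Fin n) : ℕ :=
  #(univ.filter fun a => a ≤ p ∧ q ≤ w a)

lemma dotCount_mul_swap (w : Perm (Fin n)) {p₁ p₂ : Fin n} (h : p₁ < p₂) (hw : w p₁ < w p₂)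
    (p q : Fin n) :
    dotCount (w * swap p₁ p₂) p q =
      dotCount w p q + if p₁ ≤ p ∧ p < p₂ ∧ w p₁ < q ∧ q ≤ w p₂ then 1 else 0 := by
  have hrest : ∀ v : Perm (Fin n), dotCount v p q =
      (if p₁ ≤ p ∧ q ≤ v p₁ then 1 else 0) + (if p₂ ≤ p ∧ q ≤ v p₂ then 1 else 0) +
        ∑ a ∈ {p₁, p₂}ᶜ, if a ≤ p ∧ q ≤ v a then 1 else 0 := fun v => by
    rw [dotCount, card_filter, ← sum_add_sum_compl {p₁, p₂}, sum_pair h.ne]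
  have hcompl : ∀ a ∈ ({p₁, p₂} : Finset (Fin n))ᶜ, (w * swap p₁ p₂) a = w a := fun a ha => by
    simp only [mem_compl, mem_insert, mem_singleton, not_or] at ha
    rw [Perm.mul_apply, swap_apply_of_ne_of_ne ha.1 ha.2]
  rw [hrest, hrest, sum_congr rfl fun a ha => by rw [hcompl a ha]]
  simp only [Perm.mul_apply, swap_apply_left, swap_apply_right]
  split_ifs <;> grind

lemma dotCount_le_dotCount_mul_swap {w : Perm (Fin n)} {p₁ p₂ : Fin n} (hp : p₁ ≠ p₂)
    (hlen : permLen w < permLen (w * swap p₁ p₂)) (p q : Fin n) :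
    dotCount w p q ≤ dotCount (w * swap p₁ p₂) p q := by
  wlog h : p₁ < p₂ generalizing p₁ p₂
  · rw [swap_comm] at hlen ⊢
    exact this hp.symm hlen (hp.lt_or_gt.resolve_left h)
  have hw : w p₁ < w p₂ := by
    refine (w.injective.ne hp).lt_or_gt.resolve_right fun hw => ?_
    exact (permLen_mul_swap_lt w h hw).not_gt hlen
  rw [dotCount_mul_swap w h hw]
  exact Nat.le_add_right _ _

lemma dotCount_le_of_permBruhatLE {u v : Perm (Fin n)} (h : permBruhatLE u v) (p q : Fin n) :
    dotCount u p q ≤ dotCount v p q := by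
  induction h with
  | refl => rfl
  | @tail x y _ hxy ih =>
    obtain ⟨⟨a, b, hab, rfl⟩, hlen⟩ := hxy
    have hx : swap a b * x = x * swap (x⁻¹ a) (x⁻¹ b) := by
      simp [mul_swap_eq_swap_mul]
    rw [hx] at hlen ⊢
    exact ih.trans (dotCount_le_dotCount_mul_swap (by simpa using hab) hlen p q)

lemma dotCount_eq_dotCount_add_card (w : Perm (Fin n)) (p : Fin n) {q' q : Fin n} (hq : q' ≤ q) :
    dotCount w p q' = dotCount w p q + #(univ.filter fun a => a ≤ p ∧ q' ≤ w a ∧ w a < q) := by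
  rw [dotCount, dotCount, ← card_union_of_disjoint]
  · congr 1
    ext a
    simp only [mem_filter, mem_univ, true_and, mem_union]
    constructor
    · rintro ⟨hap, hqa⟩
      exact (le_or_gt q (w a)).imp (⟨hap, ·⟩) (⟨hap, hqa, ·⟩)
    · rintro (⟨hap, hqa⟩ | ⟨hap, hqa, -⟩)
      exacts [⟨hap, hq.trans hqa⟩, ⟨hap, hqa⟩]
  · exact disjoint_filter.2 fun a _ h₁ h₂ => h₂.2.2.not_ge h₁.2

section HardDirection

variable {u v : Perm (Fin n)} {i : Fin n}

lemma apply_lt_apply_of_dotCount_le (hagree : ∀ a < i, u a = v a) (hne : u i ≠ v i)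
    (hle : dotCount u i (u i) ≤ dotCount v i (u i)) : u i < v i := by
  refine hne.lt_or_gt.resolve_right fun hvu => hle.not_gt (card_lt_card ?_)
  refine (ssubset_iff_of_subset fun a ha => ?_).2 ⟨i, by simp, by simp [hvu]⟩
  simp only [mem_filter, mem_univ, true_and] at ha ⊢
  obtain hai | rfl := ha.1.lt_or_eq
  · exact ⟨ha.1, (hagree a hai).symm ▸ ha.2⟩
  · exact absurd ha.2 hvu.not_ge

/-- The dot counts that `v * swap i k` loses, for `i` the first position where `u` and `v`
differ and `k` the first position after `i` with `u i ≤ v k < v i`, stay above those of `u`. -/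
lemma dotCount_lt_dotCount_of_agree_below (hagree : ∀ a < i, u a = v a) {k : Fin n}
    (hk : ∀ m, i < m → m < k → u i ≤ v m → v i ≤ v m) {p q : Fin n} (hip : i ≤ p) (hpk : p < k)
    (hiq : u i < q) (hqi : q ≤ v i) (hle : dotCount u p (u i) ≤ dotCount v p (u i)) :
    dotCount u p q < dotCount v p q := by
  set Z := fun w : Perm (Fin n) => univ.filter fun a => a ≤ p ∧ u i ≤ w a ∧ w a < q
  have hZ : Z v ⊂ Z u := by
    have hZi : ∀ a ∈ Z v, a < i := fun a ha => by
      simp only [Z, mem_filter, mem_univ, true_and] at ha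
      refine lt_of_not_ge fun hia => ?_
      obtain rfl | hia := hia.eq_or_lt
      · exact ha.2.2.not_ge hqi
      · exact ha.2.2.not_ge (hqi.trans (hk a hia (ha.1.trans_lt hpk) ha.2.1))
    refine (ssubset_iff_of_subset fun a ha => ?_).2 ⟨i, ?_, fun hi => (hZi i hi).false⟩
    · have := hagree a (hZi a ha)
      simp only [Z, mem_filter, mem_univ, true_and] at ha ⊢
      rwa [this]
    · simp [Z, hip, hiq]
  have hcard := card_lt_card hZ
  rw [dotCount_eq_dotCount_add_card u p hiq.le, dotCount_eq_dotCount_add_card v p hiq.le] at hle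
  simp only [Z] at hcard
  omega

lemma exists_lt_dotCount_le_mul_swap (huv : u ≠ v) (hle : ∀ p q, dotCount u p q ≤ dotCount v p q) :
    ∃ i k, i < k ∧ v k < v i ∧ ∀ p q, dotCount u p q ≤ dotCount (v * swap i k) p q := by
  obtain ⟨i, hne, hagree⟩ : ∃ i, u i ≠ v i ∧ ∀ a < i, u a = v a := by
    obtain ⟨i, hi, hmin⟩ := wellFounded_lt.has_min {a | u a ≠ v a}
      (by simpa [Set.Nonempty, Perm.ext_iff] using huv)
    exact ⟨i, hi, fun a hai => not_not.1 fun ha => hmin a ha hai⟩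
  have hlt := apply_lt_apply_of_dotCount_le hagree hne (hle i (u i))
  set K := univ.filter fun m => i < m ∧ u i ≤ v m ∧ v m < v i
  have hK : K.Nonempty := by
    set m := v⁻¹ (u i)
    have hvm : v m = u i := by simp [m]
    refine ⟨m, ?_⟩
    simp only [K, mem_filter, mem_univ, true_and, hvm, le_refl, hlt, and_true]
    refine lt_of_not_ge fun h => ?_
    obtain h | h := h.lt_or_eq
    · exact h.ne (u.injective ((hagree m h).trans hvm))
    · exact hne (h ▸ hvm).symm
  obtain ⟨k, hkK, hkmin⟩ := exists_min_image K id hK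
  simp only [K, mem_filter, mem_univ, true_and, id] at hkK hkmin
  obtain ⟨hik, huk, hki⟩ := hkK
  refine ⟨i, k, hik, hki, fun p q => ?_⟩
  have hbox := dotCount_mul_swap (v * swap i k) hik (by simpa using hki) p q
  simp only [mul_swap_mul_self, Perm.mul_apply, swap_apply_left, swap_apply_right] at hbox
  split_ifs at hbox with h
  · obtain ⟨hip, hpk, hkq, hqi⟩ := h
    have := dotCount_lt_dotCount_of_agree_below hagree
      (fun m h₁ h₂ h₃ => not_lt.1 fun h₄ => (hkmin m ⟨h₁, h₃, h₄⟩).not_gt h₂)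
      hip hpk (huk.trans_lt hkq) hqi (hle p (u i))
    have := hle p q
    omega
  · exact (hle p q).trans_eq hbox

lemma permBruhatLE_of_dotCount_le (h : ∀ p q, dotCount u p q ≤ dotCount v p q) :
    permBruhatLE u v := by
  induction hv : permLen v using Nat.strong_induction_on generalizing v with
  | _ N ih =>
    by_cases huv : u = v
    · exact huv ▸ .refl
    obtain ⟨i, k, hik, hki, hle⟩ := exists_lt_dotCount_le_mul_swap huv h
    have hlen := permLen_mul_swap_lt v hik hki
    refine (ih _ (hv ▸ hlen) hle rfl).tail ⟨⟨v i, v k, v.injective.ne hik.ne, ?_⟩, hlen⟩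
    simp [mul_swap_eq_swap_mul]

end HardDirection

theorem permBruhatLE_iff_dotCount_le {u v : Perm (Fin n)} :
    permBruhatLE u v ↔ ∀ p q, dotCount u p q ≤ dotCount v p q :=
  ⟨dotCount_le_of_permBruhatLE, permBruhatLE_of_dotCount_le⟩

end TableauCriterion

section Greedy

variable {n : ℕ}

def lastBox (σ : Perm (Fin (n + 1))) (i p q : Fin (n + 1)) : Prop :=
  σ⁻¹ i ≤ p ∧ p < σ⁻¹ (Fin.last n) ∧ i < q

lemma mem_permD {σ : Perm (Fin (n + 1))} {i : Fin (n + 1)} :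
    i ∈ permD σ ↔ i < Fin.last n ∧ σ⁻¹ i < σ⁻¹ (Fin.last n) := by
  simp [permD]

lemma dotCount_swap_last_mul {σ : Perm (Fin (n + 1))} {i : Fin (n + 1)} (hi : i ∈ permD σ)
    (p q : Fin (n + 1)) :
    dotCount (swap i (Fin.last n) * σ) p q =
      dotCount σ p q + if lastBox σ i p q then 1 else 0 := by
  obtain ⟨hiL, hσi⟩ := mem_permD.1 hi
  have h := dotCount_mul_swap σ hσi (by simpa using hiL) p q
  simp only [mul_swap_eq_swap_mul, Perm.coe_inv, apply_symm_apply] at h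
  rw [h]
  congr 2
  simp [lastBox, Fin.le_last]

lemma inv_swap_last_mul_apply (σ : Perm (Fin (n + 1))) {g h : Fin (n + 1)} (hgh : g ≠ h)
    (hh : h ≠ Fin.last n) : (swap g (Fin.last n) * σ)⁻¹ h = σ⁻¹ h := by
  rw [mul_inv_rev, swap_inv, Perm.mul_apply, swap_apply_of_ne_of_ne hgh.symm hh]

lemma lastBox_swap_last_mul_iff (σ : Perm (Fin (n + 1))) {g h : Fin (n + 1)} (hgh : g < h)
    (hh : h < Fin.last n) (p q : Fin (n + 1)) :
    lastBox (swap g (Fin.last n) * σ) h p q ↔ σ⁻¹ h ≤ p ∧ p < σ⁻¹ g ∧ h < q := by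
  rw [lastBox, inv_swap_last_mul_apply σ hgh.ne hh.ne]
  simp

lemma dotCount_prod_swap_last_mul (l : List (Fin (n + 1))) (σ : Perm (Fin (n + 1)))
    (hinc : l.Pairwise (· < ·)) (hdec : l.Pairwise fun a b => σ⁻¹ b < σ⁻¹ a)
    (hD : ∀ g ∈ l, g ∈ permD σ) (p q : Fin (n + 1)) :
    dotCount ((l.map fun i => swap i (Fin.last n)).reverse.prod * σ) p q =
      dotCount σ p q + if ∃ g ∈ l, lastBox σ g p q then 1 else 0 := by
  induction l generalizing σ with
  | nil => simp
  | cons g t ih =>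
    obtain ⟨hgt, hinc⟩ := List.pairwise_cons.1 hinc
    obtain ⟨hσgt, hdec⟩ := List.pairwise_cons.1 hdec
    have hσgL := (mem_permD.1 (hD g List.mem_cons_self)).2
    have htL : ∀ h ∈ t, h < Fin.last n := fun h hh => (mem_permD.1 (hD h (.tail g hh))).1
    set σ' := swap g (Fin.last n) * σ
    have hσ't : ∀ h ∈ t, σ'⁻¹ h = σ⁻¹ h := fun h hh =>
      inv_swap_last_mul_apply σ (hgt h hh).ne (htL h hh).ne
    have hσ'L : σ'⁻¹ (Fin.last n) = σ⁻¹ g := by simp [σ']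
    have ih' := ih σ' hinc (hdec.imp_of_mem fun ha hb hab => by rwa [hσ't _ ha, hσ't _ hb])
      fun h hh => mem_permD.2 ⟨htL h hh, by rw [hσ't h hh, hσ'L]; exact hσgt h hh⟩
    have hdisj : ¬ (lastBox σ g p q ∧ ∃ h ∈ t, lastBox σ' h p q) := by
      rintro ⟨hg, h, hh, hbox⟩
      exact ((lastBox_swap_last_mul_iff σ (hgt h hh) (htL h hh) p q).1 hbox).2.1.not_ge hg.1
    -- A box of `t` not already counted by `σ'` lies inside the box of `g`.
    have hiff : (∃ h ∈ g :: t, lastBox σ h p q) ↔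
        lastBox σ g p q ∨ ∃ h ∈ t, lastBox σ' h p q := by
      simp only [List.mem_cons, exists_eq_or_imp]
      refine ⟨fun hbox => ?_, fun hbox => ?_⟩ <;> obtain hg | ⟨h, hh, hbox⟩ := hbox
      · exact .inl hg
      · by_cases hpg : p < σ⁻¹ g
        · exact .inr ⟨h, hh, (lastBox_swap_last_mul_iff σ (hgt h hh) (htL h hh) p q).2
            ⟨hbox.1, hpg, hbox.2.2⟩⟩
        · exact .inl ⟨not_lt.1 hpg, hbox.2.1, (hgt h hh).trans hbox.2.2⟩
      · exact .inl hg
      · obtain ⟨hp, hpg, hq⟩ := (lastBox_swap_last_mul_iff σ (hgt h hh) (htL h hh) p q).1 hbox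
        exact .inr ⟨h, hh, hp, hpg.trans hσgL, hq⟩
    rw [show ((g :: t).map fun i => swap i (Fin.last n)).reverse.prod * σ =
        (t.map fun i => swap i (Fin.last n)).reverse.prod * σ' by simp [σ', mul_assoc], ih',
      dotCount_swap_last_mul (hD g List.mem_cons_self), add_assoc, if_congr hiff rfl rfl]
    by_cases hA : lastBox σ g p q <;> by_cases hB : ∃ h ∈ t, lastBox σ' h p q
    · exact absurd ⟨hA, hB⟩ hdisj
    all_goals simp [hA, hB]

lemma exists_mem_greedy_le (σ : Perm (Fin (n + 1))) {B : Finset (Fin (n + 1))} {i : Fin (n + 1)}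
    (hi : i ∈ B) : ∃ g ∈ greedy σ B, g ≤ i ∧ σ⁻¹ g ≤ σ⁻¹ i := by
  obtain ⟨g, hgS, hgmin⟩ := exists_min_image (B.filter fun j => j ≤ i ∧ σ⁻¹ j ≤ σ⁻¹ i) id
    ⟨i, mem_filter.2 ⟨hi, le_rfl, le_rfl⟩⟩
  obtain ⟨hgB, hgi, hσgi⟩ := mem_filter.1 hgS
  refine ⟨g, mem_filter.2 ⟨hgB, fun j hjB hjg => ?_⟩, hgi, hσgi⟩
  refine lt_of_le_of_ne (not_lt.1 fun hσjg => ?_) (σ⁻¹.injective.ne hjg.ne')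
  exact hjg.not_ge (hgmin j (mem_filter.2 ⟨hjB, hjg.le.trans hgi, hσjg.le.trans hσgi⟩))

lemma dotCount_sigmaB {σ : Perm (Fin (n + 1))} {B : Finset (Fin (n + 1))} (hB : B ⊆ permD σ)
    (p q : Fin (n + 1)) :
    dotCount (sigmaB σ B) p q = dotCount σ p q + if ∃ i ∈ B, lastBox σ i p q then 1 else 0 := by
  have hgB : greedy σ B ⊆ B := filter_subset _ _
  have hinc := (sortedLT_sort (greedy σ B)).pairwise
  rw [sigmaB, dotCount_prod_swap_last_mul _ σ hinc
    (hinc.imp_of_mem fun ha hb hab => (mem_filter.1 ((mem_sort _).1 hb)).2 _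
      (hgB ((mem_sort _).1 ha)) hab)
    (fun g hg => hB (hgB ((mem_sort _).1 hg)))]
  refine congrArg _ (if_congr ⟨fun ⟨g, hg, hbox⟩ => ⟨g, hgB ((mem_sort _).1 hg), hbox⟩,
    fun ⟨i, hi, hp, hpL, hq⟩ => ?_⟩ rfl rfl)
  obtain ⟨g, hg, hgi, hσgi⟩ := exists_mem_greedy_le σ hi
  exact ⟨g, (mem_sort _).2 hg, hσgi.trans hp, hpL, hgi.trans_lt hq⟩

end Greedy

/-- for nonempty `B ⊆ 𝒟(σ)`, `σ^B` is the Bruhat supremum of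
`{(i,n)·σ : i ∈ B}`: it is an upper bound, and below every upper bound. -/
theorem stmt_16 {n : ℕ} (σ : Equiv.Perm (Fin (n + 1)))
    (B : Finset (Fin (n + 1))) (hB : B ⊆ permD σ) (hne : B.Nonempty) :
    (∀ i ∈ B, permBruhatLE (Equiv.swap i (Fin.last n) * σ) (sigmaB σ B)) ∧
    (∀ z : Equiv.Perm (Fin (n + 1)),
      (∀ i ∈ B, permBruhatLE (Equiv.swap i (Fin.last n) * σ) z) →
      permBruhatLE (sigmaB σ B) z) := by
  simp only [permBruhatLE_iff_dotCount_le]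
  refine ⟨fun i hi p q => ?_, fun z hz p q => ?_⟩
  · rw [dotCount_swap_last_mul (hB hi), dotCount_sigmaB hB]
    by_cases hbox : lastBox σ i p q
    · simp [hbox, show ∃ i ∈ B, lastBox σ i p q from ⟨i, hi, hbox⟩]
    · simp [hbox]
  · rw [dotCount_sigmaB hB]
    split_ifs with hbox
    · obtain ⟨i, hi, hbox⟩ := hbox
      simpa [dotCount_swap_last_mul (hB hi), hbox] using hz i hi p q
    · obtain ⟨i, hi⟩ := hne
      have := hz i hi p q
      rw [dotCount_swap_last_mul (hB hi)] at this
      simpa using (Nat.le_add_right _ _).trans this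
end
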